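/- arXiv:1810.01323 — 3 statements merged into one kernel-verified Lean document; each statement's English description precedes it below -/
import Mathlib

section
/- Consider the linear model $Y = X\beta_0 + \epsilon$ with $X \in \mathbb{R}^{n \times p}$ ($n > p$) random and independent of $\epsilon$, where $\epsilon$ has independent components with $\mathrm{E}(\epsilon_i) = 0$ and $\mathrm{Var}(\epsilon_i) = \sigma_i^2$ (possibly unequal), and $X^T X$ is almost surely invertible. Let $\hat\beta = (X^TX)^{-1}X^T Y$ and $\hat\sigma^2 = \|Y - X\hat\beta\|_2^2/(n - p)$, and set $D = \mathrm{diag}(\sigma_1^2, \ldots, \sigma_n^2)$. Then $\mathrm{E}(\hat\sigma^2) = \operatorname{tr}(D)/n$; in particular $\hat\sigma^2$ is an unbiased estimator of the average error variance. -/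
open MeasureTheory ProbabilityTheory Matrix

/-!
The residual is `(1 - H) ε`, where `H = X (XᵀX)⁻¹ Xᵀ` is the hat matrix, a symmetric idempotent
of trace `p`; hence the residual sum of squares is the quadratic form `εᵀ (1 - H) ε`. As `H` is a
function of `X`, it is independent of `ε`, and the centred independent errors kill the
off-diagonal terms: `E(εᵀ (1 - H) ε) = ∑ᵢ (1 - E Hᵢᵢ) E εᵢ²`. Permuting the i.i.d. rows of `X`
permutes the diagonal of `H` without changing its law, so all `E Hᵢᵢ` agree, and as they sum to
`E (tr H) = p`, each equals `p / n`.
-/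

namespace Matrix

variable {R m m' k : Type*} [Fintype m] [Fintype k] [DecidableEq k]

section CommRing

variable [CommRing R]

noncomputable def hatMatrix (A : Matrix m k R) : Matrix m m R :=
  A * (Aᵀ * A)⁻¹ * Aᵀ

theorem isSymm_hatMatrix (A : Matrix m k R) : (hatMatrix A).IsSymm := by
  simp only [IsSymm, hatMatrix, transpose_mul, transpose_transpose, transpose_nonsing_inv,
    Matrix.mul_assoc]

theorem hatMatrix_mul {A : Matrix m k R} (hA : IsUnit (Aᵀ * A).det) :
    hatMatrix A * A = A := by
  rw [hatMatrix, Matrix.mul_assoc, Matrix.mul_assoc, nonsing_inv_mul _ hA, Matrix.mul_one]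

theorem isIdempotentElem_hatMatrix {A : Matrix m k R} (hA : IsUnit (Aᵀ * A).det) :
    IsIdempotentElem (hatMatrix A) :=
  calc hatMatrix A * hatMatrix A = hatMatrix A * A * (Aᵀ * A)⁻¹ * Aᵀ := by
        simp only [hatMatrix, Matrix.mul_assoc]
    _ = hatMatrix A := by rw [hatMatrix_mul hA, hatMatrix]

theorem trace_hatMatrix {A : Matrix m k R} (hA : IsUnit (Aᵀ * A).det) :
    (hatMatrix A).trace = Fintype.card k := by
  rw [hatMatrix, trace_mul_comm, ← Matrix.mul_assoc, mul_nonsing_inv _ hA, trace_one]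

theorem hatMatrix_submatrix [Fintype m'] (A : Matrix m k R) (e : m' ≃ m) :
    hatMatrix (A.submatrix e id) = (hatMatrix A).submatrix e e := by
  have hgram : (A.submatrix e id)ᵀ * A.submatrix e id = Aᵀ * A := by
    rw [transpose_submatrix, submatrix_mul_equiv _ _ _ e, submatrix_id_id]
  rw [hatMatrix, hgram, hatMatrix, transpose_submatrix,
    submatrix_mul _ _ _ id _ Function.bijective_id, submatrix_mul _ _ _ id _ Function.bijective_id,
    submatrix_id_id]

theorem mulVec_inv_mulVec_eq_hatMatrix_mulVec (A : Matrix m k R) (y : m → R) :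
    A *ᵥ ((Aᵀ * A)⁻¹ *ᵥ (Aᵀ *ᵥ y)) = hatMatrix A *ᵥ y := by
  rw [mulVec_mulVec, mulVec_mulVec, hatMatrix, Matrix.mul_assoc]

theorem one_sub_hatMatrix_mulVec_add [DecidableEq m] {A : Matrix m k R}
    (hA : IsUnit (Aᵀ * A).det) (β : k → R) (v : m → R) :
    (1 - hatMatrix A) *ᵥ (A *ᵥ β + v) = (1 - hatMatrix A) *ᵥ v := by
  rw [mulVec_add, mulVec_mulVec, Matrix.sub_mul, Matrix.one_mul, hatMatrix_mul hA, sub_self,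
    zero_mulVec, zero_add]

variable {P : Matrix m m R}

theorem IsSymm.mulVec_dotProduct_mulVec_of_isIdempotentElem (hP : P.IsSymm)
    (hP' : IsIdempotentElem P) (v : m → R) : (P *ᵥ v) ⬝ᵥ (P *ᵥ v) = v ⬝ᵥ (P *ᵥ v) := by
  rw [dotProduct_mulVec, ← mulVec_transpose, mulVec_mulVec, hP.eq, hP'.eq, dotProduct_comm]

theorem sum_sq_residual_eq_dotProduct [DecidableEq m] {A : Matrix m k R}
    (hA : IsUnit (Aᵀ * A).det) (β : k → R) (v : m → R) :
    ∑ i, ((A *ᵥ β + v) i - (A *ᵥ ((Aᵀ * A)⁻¹ *ᵥ (Aᵀ *ᵥ (A *ᵥ β + v)))) i) ^ 2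
      = v ⬝ᵥ ((1 - hatMatrix A) *ᵥ v) := by
  rw [← (isSymm_one.sub (isSymm_hatMatrix A)).mulVec_dotProduct_mulVec_of_isIdempotentElem
    (isIdempotentElem_hatMatrix hA).one_sub, ← one_sub_hatMatrix_mulVec_add hA β, sub_mulVec,
    one_mulVec, mulVec_inv_mulVec_eq_hatMatrix_mulVec]
  simp only [dotProduct, sq, Pi.sub_apply]

theorem IsSymm.sum_sq_apply_eq_of_isIdempotentElem (hP : P.IsSymm) (hP' : IsIdempotentElem P)
    (j : m) : ∑ l, P l j ^ 2 = P j j := by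
  conv_rhs => rw [← hP'.eq, mul_apply]
  exact Finset.sum_congr rfl fun l _ => by rw [sq, hP.apply j l]

variable [LinearOrder R] [IsStrictOrderedRing R]

theorem IsSymm.sq_apply_le_of_isIdempotentElem (hP : P.IsSymm) (hP' : IsIdempotentElem P)
    (i j : m) : P i j ^ 2 ≤ P j j := by
  rw [← hP.sum_sq_apply_eq_of_isIdempotentElem hP' j]
  exact Finset.single_le_sum (fun l _ => sq_nonneg (P l j)) (Finset.mem_univ i)

theorem IsSymm.abs_apply_le_one_of_isIdempotentElem (hP : P.IsSymm) (hP' : IsIdempotentElem P)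
    (i j : m) : |P i j| ≤ 1 := by
  have hjj : P j j ≤ 1 := by nlinarith [hP.sq_apply_le_of_isIdempotentElem hP' j j]
  exact (sq_le_one_iff_abs_le_one _).mp ((hP.sq_apply_le_of_isIdempotentElem hP' i j).trans hjj)

end CommRing

theorem measurable_hatMatrix_apply (i j : m) :
    Measurable fun A : m → k → ℝ => hatMatrix (of A) i j := by
  have hA : Continuous fun A : m → k → ℝ => of A := continuous_id
  have hG : Continuous fun A : m → k → ℝ => (of A)ᵀ * of A := hA.matrix_transpose.matrix_mul hA
  simp only [hatMatrix, inv_def, Ring.inverse_eq_inv, Matrix.mul_smul, Matrix.smul_mul,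
    smul_apply, smul_eq_mul]
  exact hG.matrix_det.measurable.inv.mul
    (((hA.matrix_mul hG.matrix_adjugate).matrix_mul hA.matrix_transpose).matrix_elem i j).measurable

end Matrix

namespace ProbabilityTheory

variable {Ω : Type*} [MeasurableSpace Ω] {μ : Measure Ω}

theorem iIndepFun.map_fun_equiv_eq [IsProbabilityMeasure μ] {ι α : Type*} [Fintype ι]
    [MeasurableSpace α] {Z : ι → Ω → α} (hind : iIndepFun Z μ) (hZ : ∀ i, AEMeasurable (Z i) μ)
    (hident : ∀ i j, μ.map (Z i) = μ.map (Z j)) (e : ι ≃ ι) :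
    μ.map (fun ω i => Z (e i) ω) = μ.map (fun ω i => Z i ω) := by
  rw [(hind.precomp e.injective).map_fun_eq_pi_map (fun i => hZ (e i)), hind.map_fun_eq_pi_map hZ]
  congr with i : 1
  exact hident (e i) i

theorem integral_dotProduct_mulVec_of_indepFun {ι : Type*} [Fintype ι] {M : Ω → Matrix ι ι ℝ}
    {ε : Ω → ι → ℝ} (hM : ∀ i j, Integrable (fun ω => M ω i j) μ)
    (hMε : IndepFun (fun ω i j => M ω i j) ε μ) (hε : iIndepFun (fun i ω => ε ω i) μ)
    (hmean : ∀ i, ∫ ω, ε ω i ∂μ = 0) (hL2 : ∀ i, MemLp (fun ω => ε ω i) 2 μ) :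
    ∫ ω, ε ω ⬝ᵥ (M ω *ᵥ ε ω) ∂μ = ∑ i, (∫ ω, M ω i i ∂μ) * ∫ ω, ε ω i ^ 2 ∂μ := by
  classical
  have hεε (i j : ι) : Integrable (fun ω => ε ω i * ε ω j) μ := (hL2 i).integrable_mul (hL2 j)
  have hindep (i j : ι) : IndepFun (fun ω => M ω i j) (fun ω => ε ω i * ε ω j) μ :=
    hMε.comp ((measurable_pi_apply j).comp (measurable_pi_apply i))
      ((measurable_pi_apply i).mul (measurable_pi_apply j))
  have hfactor (i j : ι) : ∫ ω, M ω i j * (ε ω i * ε ω j) ∂μ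
      = (∫ ω, M ω i j ∂μ) * ∫ ω, ε ω i * ε ω j ∂μ :=
    (hindep i j).integral_fun_mul_eq_mul_integral (hM i j).aestronglyMeasurable
      (hεε i j).aestronglyMeasurable
  have hterm (i j : ι) : Integrable (fun ω => M ω i j * (ε ω i * ε ω j)) μ :=
    (hindep i j).integrable_mul (hM i j) (hεε i j)
  have hcov {i j : ι} (hij : i ≠ j) : ∫ ω, ε ω i * ε ω j ∂μ = 0 := by
    rw [(hε.indepFun hij).integral_fun_mul_eq_mul_integral (hL2 i).aestronglyMeasurable
      (hL2 j).aestronglyMeasurable, hmean i, zero_mul]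
  calc ∫ ω, ε ω ⬝ᵥ (M ω *ᵥ ε ω) ∂μ = ∫ ω, ∑ i, ∑ j, M ω i j * (ε ω i * ε ω j) ∂μ := by
        congr with ω
        simp only [dotProduct, mulVec, Finset.mul_sum]
        exact Finset.sum_congr rfl fun i _ => Finset.sum_congr rfl fun j _ => by ring
    _ = ∑ i, ∑ j, ∫ ω, M ω i j * (ε ω i * ε ω j) ∂μ := by
        rw [integral_finsetSum _ fun i _ => integrable_finsetSum _ fun j _ => hterm i j]
        exact Finset.sum_congr rfl fun i _ => integral_finsetSum _ fun j _ => hterm i j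
    _ = ∑ i, (∫ ω, M ω i i ∂μ) * ∫ ω, ε ω i ^ 2 ∂μ := by
        refine Finset.sum_congr rfl fun i _ => ?_
        rw [Finset.sum_eq_single i (fun j _ hji => by rw [hfactor, hcov hji.symm, mul_zero])
          (by simp), hfactor]
        simp only [sq]

variable {m k : Type*} [Fintype m] [Fintype k] [DecidableEq k] {X : Ω → Matrix m k ℝ}

theorem integrable_hatMatrix_apply [IsFiniteMeasure μ] (hX : Measurable fun ω i j => X ω i j)
    (hinv : ∀ᵐ ω ∂μ, IsUnit ((X ω)ᵀ * X ω).det) (i j : m) :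
    Integrable (fun ω => hatMatrix (X ω) i j) μ :=
  Integrable.of_bound ((measurable_hatMatrix_apply i j).comp hX).aestronglyMeasurable 1
    (hinv.mono fun _ hω => (isSymm_hatMatrix _).abs_apply_le_one_of_isIdempotentElem
      (isIdempotentElem_hatMatrix hω) i j)

theorem integral_hatMatrix_apply_self [IsProbabilityMeasure μ]
    (hX : Measurable fun ω i j => X ω i j)
    (hrows : iIndepFun (fun i ω => X ω i) μ)
    (hident : ∀ i j, μ.map (fun ω => X ω i) = μ.map (fun ω => X ω j))
    (hinv : ∀ᵐ ω ∂μ, IsUnit ((X ω)ᵀ * X ω).det) (i : m) :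
    ∫ ω, hatMatrix (X ω) i i ∂μ = Fintype.card k / Fintype.card m := by
  classical
  have hrow (l : m) : AEMeasurable (fun ω => X ω l) μ :=
    ((measurable_pi_apply l).comp hX).aemeasurable
  have hsame (j : m) : ∫ ω, hatMatrix (X ω) j j ∂μ = ∫ ω, hatMatrix (X ω) i i ∂μ := by
    let e := Equiv.swap i j
    have hF := measurable_hatMatrix_apply (k := k) i i
    have hpermuted : ∀ ω, hatMatrix (X ω) j j = hatMatrix (of fun l => X ω (e l)) i i := by
      intro ω
      rw [show of (fun l => X ω (e l)) = (X ω).submatrix e id from rfl, hatMatrix_submatrix]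
      simp [e]
    simp_rw [hpermuted]
    rw [← integral_map (aemeasurable_pi_lambda _ fun l => hrow (e l)) hF.aestronglyMeasurable,
      hrows.map_fun_equiv_eq hrow hident e,
      integral_map (aemeasurable_pi_lambda _ hrow) hF.aestronglyMeasurable]
    rfl
  have htrace : ∑ j, ∫ ω, hatMatrix (X ω) j j ∂μ = Fintype.card k := by
    rw [← integral_finsetSum _ fun j _ => integrable_hatMatrix_apply hX hinv j j]
    calc _ = ∫ ω, (hatMatrix (X ω)).trace ∂μ := rfl
      _ = Fintype.card k := by
        rw [integral_congr_ae (hinv.mono fun ω hω => trace_hatMatrix hω), integral_const]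
        simp
  simp only [hsame, Finset.sum_const, Finset.card_univ, nsmul_eq_mul] at htrace
  have : (0 : ℝ) < Fintype.card m := Nat.cast_pos.mpr (Fintype.card_pos_iff.mpr ⟨i⟩)
  field_simp
  linarith

end ProbabilityTheory

theorem sigma_hat_unbiased_heteroskedastic_general {n p : ℕ} {Ω : Type*} [MeasurableSpace Ω]
    (μ : Measure Ω) [IsProbabilityMeasure μ] (hpn : p < n)
    (X : Ω → Matrix (Fin n) (Fin p) ℝ) (ε : Ω → Fin n → ℝ)
    (β₀ : Fin p → ℝ) (σs : Fin n → ℝ)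
    (hXmeas : Measurable fun ω i j => X ω i j)
    (hindep : IndepFun (fun ω i j => X ω i j) ε μ)
    (hεindep : iIndepFun (fun i ω => ε ω i) μ)
    (hmean : ∀ i, ∫ ω, ε ω i ∂μ = 0)
    (hvar : ∀ i, ∫ ω, (ε ω i) ^ 2 ∂μ = σs i)
    (hL2 : ∀ i, MemLp (fun ω => ε ω i) 2 μ)
    (hrows : iIndepFun (fun i ω => X ω i) μ)
    (hident : ∀ i j, μ.map (fun ω => X ω i) = μ.map (fun ω => X ω j))
    (hinv : ∀ᵐ ω ∂μ, IsUnit ((X ω)ᵀ * X ω).det)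
    (Y : Ω → Fin n → ℝ) (hY : Y = fun ω => (X ω) *ᵥ β₀ + ε ω)
    (βhat : Ω → Fin p → ℝ)
    (hβhat : βhat = fun ω => ((X ω)ᵀ * X ω)⁻¹ *ᵥ ((X ω)ᵀ *ᵥ Y ω))
    (σhat : Ω → ℝ)
    (hσhat : σhat = fun ω => (∑ i, (Y ω i - ((X ω) *ᵥ βhat ω) i) ^ 2) / ((n : ℝ) - p)) :
    ∫ ω, σhat ω ∂μ = (∑ i, σs i) / n := by
  have hrss : σhat =ᵐ[μ] fun ω => ε ω ⬝ᵥ ((1 - hatMatrix (X ω)) *ᵥ ε ω) / (n - p) := by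
    filter_upwards [hinv] with ω hω
    simp only [hσhat, hβhat, hY, sum_sq_residual_eq_dotProduct hω]
  have hM (i j : Fin n) : Integrable (fun ω => (1 - hatMatrix (X ω)) i j) μ :=
    (integrable_const _).sub (integrable_hatMatrix_apply hXmeas hinv i j)
  have hMε : IndepFun (fun ω i j => (1 - hatMatrix (X ω)) i j) ε μ :=
    hindep.comp (measurable_pi_lambda _ fun i => measurable_pi_lambda _ fun j =>
      measurable_const.sub (measurable_hatMatrix_apply i j)) measurable_id
  have hdiag (i : Fin n) : ∫ ω, (1 - hatMatrix (X ω)) i i ∂μ = 1 - p / n := by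
    simp only [Matrix.sub_apply, one_apply_eq]
    rw [integral_sub (integrable_const _) (integrable_hatMatrix_apply hXmeas hinv i i),
      integral_hatMatrix_apply_self hXmeas hrows hident hinv]
    simp
  rw [integral_congr_ae hrss, integral_div, integral_dotProduct_mulVec_of_indepFun hM hMε hεindep
    hmean hL2]
  simp only [hdiag, hvar, ← Finset.mul_sum]
  have hp : (p : ℝ) < n := by exact_mod_cast hpn
  have hnp : (n : ℝ) - p ≠ 0 := by linarith
  have hn : (n : ℝ) ≠ 0 := Nat.cast_ne_zero.mpr (Nat.ne_zero_of_lt hpn)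
  field_simp

/-- Under heteroskedastic independent errors with variances `σᵢ²` and i.i.d. rows of a
random design `X` independent of the errors, the residual variance estimator
`σ̂² = ‖Y - Xβ̂‖₂²/(n-p)` satisfies `E(σ̂²) = tr(D)/n = (∑ᵢ σᵢ²)/n`. -/
theorem sigma_hat_unbiased_heteroskedastic {n p : ℕ} {Ω : Type*} [MeasurableSpace Ω]
    (μ : Measure Ω) [IsProbabilityMeasure μ] (hpn : p < n)
    (X : Ω → Matrix (Fin n) (Fin p) ℝ) (ε : Ω → Fin n → ℝ)
    (β₀ : Fin p → ℝ) (σs : Fin n → ℝ)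
    (hXmeas : Measurable fun ω i j => X ω i j)
    (hεmeas : ∀ i, Measurable fun ω => ε ω i)
    (hindep : IndepFun (fun ω i j => X ω i j) ε μ)
    (hεindep : iIndepFun (fun i ω => ε ω i) μ)
    (hmean : ∀ i, ∫ ω, ε ω i ∂μ = 0)
    (hvar : ∀ i, ∫ ω, (ε ω i) ^ 2 ∂μ = σs i)
    (hL2 : ∀ i, MemLp (fun ω => ε ω i) 2 μ)
    (hrows : iIndepFun (fun i ω => X ω i) μ)
    (hident : ∀ i j, μ.map (fun ω => X ω i) = μ.map (fun ω => X ω j))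
    (hinv : ∀ᵐ ω ∂μ, IsUnit ((X ω)ᵀ * X ω).det)
    (Y : Ω → Fin n → ℝ) (hY : Y = fun ω => (X ω) *ᵥ β₀ + ε ω)
    (βhat : Ω → Fin p → ℝ)
    (hβhat : βhat = fun ω => ((X ω)ᵀ * X ω)⁻¹ *ᵥ ((X ω)ᵀ *ᵥ Y ω))
    (σhat : Ω → ℝ)
    (hσhat : σhat = fun ω => (∑ i, (Y ω i - ((X ω) *ᵥ βhat ω) i) ^ 2) / ((n : ℝ) - p))
    (hint : Integrable σhat μ) :
    ∫ ω, σhat ω ∂μ = (∑ i, σs i) / n :=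
  sigma_hat_unbiased_heteroskedastic_general μ hpn X ε β₀ σs hXmeas hindep hεindep hmean hvar hL2
    hrows hident hinv Y hY βhat hβhat σhat hσhat
end

section
/- Let $W$ be a square-integrable function of $n$ independent random variables $Z_1, \ldots, Z_n$, and for each $i$ let $W_{(i)}$ be any square-integrable function of the variables excluding $Z_i$. Then $\mathrm{Var}(W) \leq \sum_{i=1}^n \mathrm{E}(W - W_{(i)})^2$ (Efron–Stein inequality, upper-bound form). -/
/-! Induct on the number of coordinates, splitting off the first one. Write `g` for the
average of `W` over `Z₁`. The law of total variance gives
`Var W = E[Var(W | Z₂, …, Zₙ)] + Var g`, and the conditional variance is at most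
`E[(W - W₍₁₎)² | Z₂, …, Zₙ]` because `W₍₁₎` is constant in `Z₁`. The induction hypothesis
bounds `Var g` through the averages `g₍ᵢ₎` of the `W₍ᵢ₎` over `Z₁`, and by Jensen
`E(g - g₍ᵢ₎)² ≤ E(W - W₍ᵢ₎)²`. -/

open MeasureTheory ProbabilityTheory

section

variable {Ω : Type*} [MeasurableSpace Ω] {μ : Measure Ω} [IsProbabilityMeasure μ]

theorem variance_le_integral_sub_sq {f : Ω → ℝ} (hf : AEStronglyMeasurable f μ) (c : ℝ) :
    Var[f; μ] ≤ ∫ ω, (f ω - c) ^ 2 ∂μ := by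
  rw [← variance_sub_const hf c]
  exact variance_le_expectation_sq (by fun_prop)

theorem sq_integral_le_integral_sq {f : Ω → ℝ} (hf : MemLp f 2 μ) :
    (∫ ω, f ω ∂μ) ^ 2 ≤ ∫ ω, f ω ^ 2 ∂μ := by
  have := variance_nonneg f μ
  rw [variance_eq_sub hf] at this
  simpa using this

end

section Product

variable {X Y : Type*} [MeasurableSpace X] [MeasurableSpace Y] {ν : Measure X} {m : Measure Y}
  {F : X × Y → ℝ}

theorem MeasureTheory.MemLp.prod_left_ae [SFinite ν] [SFinite m] (hF : MemLp F 2 (ν.prod m)) :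
    ∀ᵐ y ∂m, MemLp (fun x ↦ F (x, y)) 2 ν := by
  filter_upwards [hF.integrable_sq.prod_left_ae, hF.1.prod_swap.prodMk_left] with y hint hmeas
  exact (memLp_two_iff_integrable_sq hmeas).2 hint

theorem MeasureTheory.MemLp.integral_prod_right [IsProbabilityMeasure ν] [SFinite m]
    (hF : MemLp F 2 (ν.prod m)) :
    MemLp (fun y ↦ ∫ x, F (x, y) ∂ν) 2 m := by
  have hmeas : AEStronglyMeasurable (fun y ↦ ∫ x, F (x, y) ∂ν) m :=
    hF.1.prod_swap.integral_prod_right'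
  refine (memLp_two_iff_integrable_sq hmeas).2 <|
    hF.integrable_sq.integral_prod_right.mono' (hmeas.pow 2) ?_
  filter_upwards [hF.prod_left_ae] with y hy
  rw [Real.norm_of_nonneg (sq_nonneg _)]
  exact sq_integral_le_integral_sq hy

theorem integral_sq_prod_eq_integral_variance_add [IsProbabilityMeasure ν] [SFinite m]
    (hF : MemLp F 2 (ν.prod m)) :
    ∫ p, F p ^ 2 ∂(ν.prod m) =
      ∫ y, Var[fun x ↦ F (x, y); ν] ∂m + ∫ y, (∫ x, F (x, y) ∂ν) ^ 2 ∂m := by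
  have hsq := hF.integrable_sq
  have hvar : (fun y ↦ Var[fun x ↦ F (x, y); ν]) =ᵐ[m]
      fun y ↦ ∫ x, F (x, y) ^ 2 ∂ν - (∫ x, F (x, y) ∂ν) ^ 2 := by
    filter_upwards [hF.prod_left_ae] with y hy
    simpa using variance_eq_sub hy
  rw [integral_congr_ae hvar,
    integral_sub hsq.integral_prod_right hF.integral_prod_right.integrable_sq,
    integral_prod_symm _ hsq, sub_add_cancel]

theorem integral_sq_integral_le [IsProbabilityMeasure ν] [SFinite m] (hF : MemLp F 2 (ν.prod m)) :
    ∫ y, (∫ x, F (x, y) ∂ν) ^ 2 ∂m ≤ ∫ p, F p ^ 2 ∂(ν.prod m) := by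
  rw [integral_sq_prod_eq_integral_variance_add hF, le_add_iff_nonneg_left]
  exact integral_nonneg fun y ↦ variance_nonneg _ _

theorem variance_prod_eq_integral_variance_add [IsProbabilityMeasure ν] [IsProbabilityMeasure m]
    (hF : MemLp F 2 (ν.prod m)) :
    Var[F; ν.prod m] =
      ∫ y, Var[fun x ↦ F (x, y); ν] ∂m + Var[fun y ↦ ∫ x, F (x, y) ∂ν; m] := by
  have := integral_sq_prod_eq_integral_variance_add hF
  rw [variance_eq_sub hF, variance_eq_sub hF.integral_prod_right,
    ← integral_prod_symm _ (hF.integrable one_le_two)]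
  simp only [Pi.pow_apply] at this ⊢
  linarith

theorem variance_prod_le_integral_sub_sq_add [IsProbabilityMeasure ν] [IsProbabilityMeasure m]
    {C : X × Y → ℝ} (hF : MemLp F 2 (ν.prod m)) (hC : MemLp C 2 (ν.prod m))
    (hCx : ∀ x x' y, C (x, y) = C (x', y)) :
    Var[F; ν.prod m] ≤
      ∫ p, (F p - C p) ^ 2 ∂(ν.prod m) + Var[fun y ↦ ∫ x, F (x, y) ∂ν; m] := by
  obtain ⟨x₀⟩ := nonempty_of_isProbabilityMeasure ν
  have hFC : Integrable (fun p ↦ (F p - C p) ^ 2) (ν.prod m) := (hF.sub hC).integrable_sq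
  rw [variance_prod_eq_integral_variance_add hF, integral_prod_symm _ hFC]
  refine add_le_add (integral_mono_of_nonneg (.of_forall fun y ↦ variance_nonneg _ _)
    hFC.integral_prod_right ?_) le_rfl
  filter_upwards [hF.prod_left_ae] with y hy
  simpa only [hCx _ x₀ y] using variance_le_integral_sub_sq hy.1 (C (x₀, y))

theorem integral_sq_integral_sub_integral_le [IsProbabilityMeasure ν] [SFinite m]
    {D : X × Y → ℝ} (hF : MemLp F 2 (ν.prod m)) (hD : MemLp D 2 (ν.prod m)) :
    ∫ y, (∫ x, F (x, y) ∂ν - ∫ x, D (x, y) ∂ν) ^ 2 ∂m ≤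
      ∫ p, (F p - D p) ^ 2 ∂(ν.prod m) := by
  calc _ = ∫ y, (∫ x, (F (x, y) - D (x, y)) ∂ν) ^ 2 ∂m := by
        refine integral_congr_ae ?_
        filter_upwards [hF.prod_left_ae, hD.prod_left_ae] with y hFy hDy
        rw [integral_sub (hFy.integrable one_le_two) (hDy.integrable one_le_two)]
    _ ≤ _ := integral_sq_integral_le (hF.sub hD)

end Product

section

variable {n : ℕ} {α : Fin (n + 1) → Type*} {β : Type*} {f : (∀ j, α j) → β}
  {p : Fin (n + 1)}

theorem DependsOn.apply_insertNth_eq (hf : DependsOn f {p}ᶜ) (x x' : α p)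
    (y : ∀ j, α (p.succAbove j)) :
    f (Fin.insertNth p x y) = f (Fin.insertNth p x' y) := hf fun j hj ↦ by
  obtain ⟨k, rfl⟩ := Fin.exists_succAbove_eq hj
  simp only [Fin.insertNth_apply_succAbove]

theorem DependsOn.comp_insertNth {i : Fin n} (hf : DependsOn f {p.succAbove i}ᶜ) (x : α p) :
    DependsOn (fun y ↦ f (Fin.insertNth p x y)) {i}ᶜ := fun y y' h ↦ hf fun j hj ↦ by
  rcases Fin.eq_self_or_eq_succAbove p j with rfl | ⟨k, rfl⟩
  · simp only [Fin.insertNth_apply_same]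
  · simp only [Fin.insertNth_apply_succAbove]
    exact h k fun hk ↦ hj (congrArg _ hk)

end

def HasEfronSteinBound {ι : Type*} [Fintype ι] {Ω : ι → Type*} [∀ i, MeasurableSpace (Ω i)]
    (μ : ∀ i, Measure (Ω i)) : Prop :=
  ∀ (W : (∀ i, Ω i) → ℝ) (Wd : ι → (∀ i, Ω i) → ℝ), MemLp W 2 (Measure.pi μ) →
    (∀ i, MemLp (Wd i) 2 (Measure.pi μ)) → (∀ i, DependsOn (Wd i) {i}ᶜ) →
    Var[W; Measure.pi μ] ≤ ∑ i, ∫ x, (W x - Wd i x) ^ 2 ∂(Measure.pi μ)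

theorem hasEfronSteinBound_of_isEmpty {ι : Type*} [Fintype ι] [IsEmpty ι] {Ω : ι → Type*}
    [∀ i, MeasurableSpace (Ω i)] (μ : ∀ i, Measure (Ω i)) [∀ i, IsProbabilityMeasure (μ i)] :
    HasEfronSteinBound μ := by
  intro W Wd hW _ _
  have hconst : ∀ x, W x = W isEmptyElim := fun x ↦ congrArg W (Subsingleton.elim _ _)
  simpa [hconst] using variance_le_integral_sub_sq hW.1 (W isEmptyElim)

theorem hasEfronSteinBound_succ {n : ℕ} {Ω : Fin (n + 1) → Type*}
    [∀ i, MeasurableSpace (Ω i)] (μ : ∀ i, Measure (Ω i)) [∀ i, IsProbabilityMeasure (μ i)]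
    (ih : HasEfronSteinBound fun j ↦ μ (Fin.succAbove 0 j)) : HasEfronSteinBound μ := by
  intro W Wd hW hWd hdep
  set ν := μ 0
  set ρ := Measure.pi fun j ↦ μ (Fin.succAbove 0 j)
  have he : MeasurePreserving (MeasurableEquiv.piFinSuccAbove Ω 0).symm (ν.prod ρ)
      (Measure.pi μ) := (measurePreserving_piFinSuccAbove μ 0).symm
  set F : Ω 0 × (∀ j, Ω (Fin.succAbove 0 j)) → ℝ := fun p ↦ W (Fin.insertNth 0 p.1 p.2)
  set D : Fin (n + 1) → Ω 0 × (∀ j, Ω (Fin.succAbove 0 j)) → ℝ :=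
    fun i p ↦ Wd i (Fin.insertNth 0 p.1 p.2)
  have hF : MemLp F 2 (ν.prod ρ) := hW.comp_measurePreserving he
  have hD i : MemLp (D i) 2 (ν.prod ρ) := (hWd i).comp_measurePreserving he
  have hsq i : ∫ x, (W x - Wd i x) ^ 2 ∂(Measure.pi μ) =
      ∫ p, (F p - D i p) ^ 2 ∂(ν.prod ρ) :=
    (he.integral_comp' fun x ↦ (W x - Wd i x) ^ 2).symm
  have hG i : DependsOn (fun y ↦ ∫ x, D (Fin.succAbove 0 i) (x, y) ∂ν) {i}ᶜ :=
    fun y y' h ↦ integral_congr_ae <| .of_forall fun x ↦ ((hdep _).comp_insertNth x h)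
  calc Var[W; Measure.pi μ] = Var[F; ν.prod ρ] := (he.variance_fun_comp hW.aemeasurable).symm
    _ ≤ ∫ p, (F p - D 0 p) ^ 2 ∂(ν.prod ρ) + Var[fun y ↦ ∫ x, F (x, y) ∂ν; ρ] :=
      variance_prod_le_integral_sub_sq_add hF (hD 0) (hdep 0).apply_insertNth_eq
    _ ≤ ∫ p, (F p - D 0 p) ^ 2 ∂(ν.prod ρ) + ∑ i : Fin n,
          ∫ y, (∫ x, F (x, y) ∂ν - ∫ x, D (Fin.succAbove 0 i) (x, y) ∂ν) ^ 2 ∂ρ := by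
      gcongr
      exact ih _ _ hF.integral_prod_right (fun i ↦ (hD _).integral_prod_right) hG
    _ ≤ ∫ p, (F p - D 0 p) ^ 2 ∂(ν.prod ρ) + ∑ i : Fin n,
          ∫ p, (F p - D (Fin.succAbove 0 i) p) ^ 2 ∂(ν.prod ρ) := by
      gcongr with i
      exact integral_sq_integral_sub_integral_le hF (hD _)
    _ = ∑ i, ∫ x, (W x - Wd i x) ^ 2 ∂(Measure.pi μ) := by
      rw [Fin.sum_univ_succAbove _ 0]
      simp only [hsq]

theorem hasEfronSteinBound_fin : ∀ (n : ℕ) {Ω : Fin n → Type*}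
    [∀ i, MeasurableSpace (Ω i)] (μ : ∀ i, Measure (Ω i)) [∀ i, IsProbabilityMeasure (μ i)],
    HasEfronSteinBound μ
  | 0, _, _, μ, _ => hasEfronSteinBound_of_isEmpty μ
  | n + 1, _, _, μ, _ => hasEfronSteinBound_succ μ (hasEfronSteinBound_fin n _)

/-- Efron–Stein inequality (upper-bound form): if `W` is a square-integrable function of
`n` independent random variables and `W₍ᵢ₎` is any square-integrable function not
depending on the `i`-th variable, then `Var(W) ≤ ∑ᵢ E(W - W₍ᵢ₎)²`. -/
theorem efron_stein_upper_bound {n : ℕ} {Ω : Fin n → Type*}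
    [∀ i, MeasurableSpace (Ω i)]
    (μ : ∀ i, Measure (Ω i)) [∀ i, IsProbabilityMeasure (μ i)]
    (W : (∀ i, Ω i) → ℝ) (Wd : Fin n → (∀ i, Ω i) → ℝ)
    (hW : MemLp W 2 (Measure.pi μ))
    (hWd : ∀ i, MemLp (Wd i) 2 (Measure.pi μ))
    (hdep : ∀ i x y, (∀ j, j ≠ i → x j = y j) → Wd i x = Wd i y) :
    variance W (Measure.pi μ) ≤
      ∑ i, ∫ x, (W x - Wd i x) ^ 2 ∂(Measure.pi μ) :=
  hasEfronSteinBound_fin n μ W Wd hW hWd fun i _ _ ↦ hdep i _ _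
end

section
/- Let $g$ and $h$ be probability density functions on a measure space with corresponding probability measures $G$ and $H$. Then $\int \min\{g(x), h(x)\}\, dx \geq \frac{1}{2} \exp\{-\mathrm{KL}(G, H)\}$, where $\mathrm{KL}(G, H) = \int \log\{g(x)/h(x)\}\, g(x)\, dx$ is the Kullback–Leibler divergence. -/
/-!
Write `B = ∫ √(g h)`. Jensen's inequality for `exp` under the probability density `g`, applied
to `log (h / g) / 2`, gives `exp (-KL / 2) ≤ B`. Since `√(g h) = √(min g h * max g h)`,
Cauchy–Schwarz gives `B² ≤ (∫ min g h) (∫ max g h)`, and `∫ min g h + ∫ max g h = 2` bounds the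
second factor by `2`.
-/

open MeasureTheory Real

theorem Real.exp_half_log_div_mul {a b : ℝ} (ha : 0 < a) (hb : 0 < b) :
    exp (log (b / a) / 2) * a = √(a * b) := by
  rw [exp_half, exp_log (div_pos hb ha), sqrt_div' b ha.le, Real.sqrt_mul ha.le]
  field_simp
  exact (sq_sqrt ha.le).symm

namespace MeasureTheory

variable {α : Type*} [MeasurableSpace α] {μ : Measure α} {f g h : α → ℝ}

theorem Integrable.memLp_two_sqrt (hf0 : 0 ≤ᵐ[μ] f) (hf : Integrable f μ) :
    MemLp (fun x => √(f x)) 2 μ := by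
  refine (memLp_two_iff_integrable_sq (continuous_sqrt.comp_aestronglyMeasurable hf.1)).2 ?_
  refine hf.congr ?_
  filter_upwards [hf0] with x hx using (sq_sqrt hx).symm

theorem Integrable.sqrt_mul (hf0 : 0 ≤ᵐ[μ] f) (hg0 : 0 ≤ᵐ[μ] g)
    (hf : Integrable f μ) (hg : Integrable g μ) :
    Integrable (fun x => √(f x * g x)) μ := by
  refine ((hf.memLp_two_sqrt hf0).integrable_mul (hg.memLp_two_sqrt hg0)).congr ?_
  filter_upwards [hf0] with x hx using (Real.sqrt_mul hx (g x)).symm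

theorem integral_sqrt_mul_le (hf0 : 0 ≤ᵐ[μ] f) (hg0 : 0 ≤ᵐ[μ] g)
    (hf : Integrable f μ) (hg : Integrable g μ) :
    ∫ x, √(f x * g x) ∂μ ≤ √(∫ x, f x ∂μ) * √(∫ x, g x ∂μ) := by
  have integral_sqrt_rpow_two {u : α → ℝ} (hu0 : 0 ≤ᵐ[μ] u) :
      ∫ x, √(u x) ^ (2 : ℝ) ∂μ = ∫ x, u x ∂μ := by
    refine integral_congr_ae ?_
    filter_upwards [hu0] with x hx
    rw [rpow_two, sq_sqrt hx]
  have holder := integral_mul_le_Lp_mul_Lq_of_nonneg HolderConjugate.two_two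
    (ae_of_all μ fun x => sqrt_nonneg (f x)) (ae_of_all μ fun x => sqrt_nonneg (g x))
    (by simpa using hf.memLp_two_sqrt hf0) (by simpa using hg.memLp_two_sqrt hg0)
  rw [integral_sqrt_rpow_two hf0, integral_sqrt_rpow_two hg0, ← sqrt_eq_rpow,
    ← sqrt_eq_rpow] at holder
  refine le_of_eq_of_le (integral_congr_ae ?_) holder
  filter_upwards [hf0] with x hx using sqrt_mul hx (g x)

theorem exp_integral_mul_le_integral_exp_mul (hg0 : 0 ≤ᵐ[μ] g) (hg : Integrable g μ)
    (hg1 : ∫ x, g x ∂μ = 1) (hfg : Integrable (fun x => f x * g x) μ)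
    (hexp : Integrable (fun x => exp (f x) * g x) μ) :
    exp (∫ x, f x * g x ∂μ) ≤ ∫ x, exp (f x) * g x ∂μ := by
  set m := ∫ x, f x * g x ∂μ
  have tangent : ∀ᵐ x ∂μ, exp m * (f x * g x + (1 - m) * g x) ≤ exp (f x) * g x := by
    filter_upwards [hg0] with x hx
    calc exp m * (f x * g x + (1 - m) * g x) = exp m * ((f x - m + 1) * g x) := by ring
      _ ≤ exp m * (exp (f x - m) * g x) := by gcongr; exact add_one_le_exp _
      _ = exp (f x) * g x := by rw [← mul_assoc, ← exp_add, add_sub_cancel]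
  calc exp m = ∫ x, exp m * (f x * g x + (1 - m) * g x) ∂μ := by
        rw [integral_const_mul, integral_add hfg (hg.const_mul _), integral_const_mul, hg1]
        ring
    _ ≤ ∫ x, exp (f x) * g x ∂μ :=
        integral_mono_ae ((hfg.add (hg.const_mul _)).const_mul _) hexp tangent

theorem integral_min_add_integral_max (hf : Integrable f μ) (hg : Integrable g μ) :
    ∫ x, min (f x) (g x) ∂μ + ∫ x, max (f x) (g x) ∂μ = ∫ x, f x ∂μ + ∫ x, g x ∂μ := by
  have hmin : Integrable (fun x => min (f x) (g x)) μ := hf.inf hg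
  have hmax : Integrable (fun x => max (f x) (g x)) μ := hf.sup hg
  rw [← integral_add hmin hmax, ← integral_add hf hg]
  simp only [min_add_max]

theorem exp_neg_half_integral_log_div_mul_le_integral_sqrt_mul (hg0 : 0 ≤ᵐ[μ] g)
    (hh0 : 0 ≤ᵐ[μ] h) (hg : Integrable g μ) (hh : Integrable h μ) (hg1 : ∫ x, g x ∂μ = 1)
    (habs : ∀ᵐ x ∂μ, h x = 0 → g x = 0)
    (hKL : Integrable (fun x => log (g x / h x) * g x) μ) :
    exp (-(∫ x, log (g x / h x) * g x ∂μ) / 2) ≤ ∫ x, √(g x * h x) ∂μ := by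
  set f : α → ℝ := fun x => log (h x / g x) / 2
  have hfg : (fun x => f x * g x) = fun x => -(log (g x / h x) * g x) / 2 := by
    ext x
    change log (h x / g x) / 2 * g x = _
    rw [← inv_div (g x) (h x), log_inv]
    ring
  have hexp : (fun x => exp (f x) * g x) =ᵐ[μ] fun x => √(g x * h x) := by
    filter_upwards [hg0, hh0, habs] with x hgx hhx habsx
    rcases hgx.eq_or_lt with hgx | hgx
    · simp [← hgx]
    · exact exp_half_log_div_mul hgx (hhx.lt_of_ne fun h0 => hgx.ne' (habsx h0.symm))
  have jensen := exp_integral_mul_le_integral_exp_mul hg0 hg hg1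
    (by rw [hfg]; exact hKL.neg.div_const 2) ((hg.sqrt_mul hg0 hh0 hh).congr hexp.symm)
  rwa [hfg, integral_congr_ae hexp, integral_div, integral_neg] at jensen

end MeasureTheory

theorem min_density_ge_exp_neg_KL_general {α : Type*} [MeasurableSpace α] (ν : Measure α)
    (g h : α → ℝ)
    (hg0 : ∀ x, 0 ≤ g x) (hh0 : ∀ x, 0 ≤ h x)
    (hgint : Integrable g ν) (hhint : Integrable h ν)
    (hg1 : ∫ x, g x ∂ν = 1) (hh1 : ∫ x, h x ∂ν = 1)
    (habs : ∀ᵐ x ∂ν, h x = 0 → g x = 0)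
    (hKL : Integrable (fun x => Real.log (g x / h x) * g x) ν) :
    (1 / 2) * Real.exp (-(∫ x, Real.log (g x / h x) * g x ∂ν)) ≤
      ∫ x, min (g x) (h x) ∂ν := by
  set KL := ∫ x, log (g x / h x) * g x ∂ν
  set m := ∫ x, min (g x) (h x) ∂ν
  set M := ∫ x, max (g x) (h x) ∂ν
  have hm0 : 0 ≤ m := integral_nonneg fun x => le_min (hg0 x) (hh0 x)
  have hM0 : 0 ≤ M := integral_nonneg fun x => (hg0 x).trans (le_max_left _ _)
  have hmM : m + M = 2 := by
    rw [integral_min_add_integral_max hgint hhint, hg1, hh1]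
    norm_num
  have jensen : exp (-KL / 2) ≤ ∫ x, √(g x * h x) ∂ν :=
    exp_neg_half_integral_log_div_mul_le_integral_sqrt_mul (ae_of_all ν hg0) (ae_of_all ν hh0)
      hgint hhint hg1 habs hKL
  have cauchy_schwarz : ∫ x, √(g x * h x) ∂ν ≤ √m * √M := by
    have := integral_sqrt_mul_le (ae_of_all ν fun x => le_min (hg0 x) (hh0 x))
      (ae_of_all ν fun x => (hg0 x).trans (le_max_left _ _)) (hgint.inf hhint)
      (hgint.sup hhint)
    simpa only [min_mul_max] using this
  calc 1 / 2 * exp (-KL) = 1 / 2 * exp (-KL / 2) ^ 2 := by rw [← exp_nat_mul]; ring_nf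
    _ ≤ 1 / 2 * (√m * √M) ^ 2 := by gcongr; exact jensen.trans cauchy_schwarz
    _ = m * M / 2 := by rw [mul_pow, sq_sqrt hm0, sq_sqrt hM0]; ring
    _ ≤ m := by nlinarith

/-- Le Cam-type bound: for probability densities `g, h` (w.r.t. a dominating measure `ν`)
with `h = 0 → g = 0` a.e. and integrable KL integrand,
`∫ min(g,h) ≥ (1/2) exp(-KL(G,H))` where `KL(G,H) = ∫ log(g/h) g`. -/
theorem min_density_ge_exp_neg_KL {α : Type*} [MeasurableSpace α] (ν : Measure α)
    (g h : α → ℝ) (hgm : Measurable g) (hhm : Measurable h)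
    (hg0 : ∀ x, 0 ≤ g x) (hh0 : ∀ x, 0 ≤ h x)
    (hgint : Integrable g ν) (hhint : Integrable h ν)
    (hg1 : ∫ x, g x ∂ν = 1) (hh1 : ∫ x, h x ∂ν = 1)
    (habs : ∀ᵐ x ∂ν, h x = 0 → g x = 0)
    (hKL : Integrable (fun x => Real.log (g x / h x) * g x) ν) :
    (1 / 2) * Real.exp (-(∫ x, Real.log (g x / h x) * g x ∂ν)) ≤
      ∫ x, min (g x) (h x) ∂ν :=
  min_density_ge_exp_neg_KL_general ν g h hg0 hh0 hgint hhint hg1 hh1 habs hKL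
end
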